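/- Let Q be an axis-parallel cube in ℝ^d with center c_Q and side length ℓ_Q, and let β > -d. Then there exist positive constants c, C depending only on d and β such that c · max(ℓ_Q, |c_Q|)^β · |Q| ≤ ∫_Q |x|^β dx ≤ C · max(ℓ_Q, |c_Q|)^β · |Q|. -/

import Mathlib

/-!
Both sides scale like `ℓ ^ (β + d)` under `x ↦ ℓ • x`, so it suffices to compare
`∫_{cube z 1} ‖x‖ ^ β` with `max 1 ‖z‖ ^ β`. When `‖z‖ > √d`, every point of the unit cube
has norm between `‖z‖ / 2` and `2 ‖z‖`. When `‖z‖ ≤ √d`, both sides are bounded above and below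
by positive constants: the integral is at most the integral over the ball of radius `2 √d`,
which is finite because `β > -d`, and at least the integral over a subcube of side `1 / 4` that
stays at distance `1 / 4` from the origin.
-/

open MeasureTheory

/-- The axis-parallel cube in `ℝ^d` with center `c` and side length `ℓ`. -/
noncomputable def cube (d : ℕ) (c : EuclideanSpace ℝ (Fin d)) (ℓ : ℝ) :
    Set (EuclideanSpace ℝ (Fin d)) := {x | ∀ i, |x i - c i| ≤ ℓ / 2}

open Set Filter Asymptotics Metric Pointwise

section Cube

variable {d : ℕ}

lemma cube_eq_preimage_pi (c : EuclideanSpace ℝ (Fin d)) (ℓ : ℝ) :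
    cube d c ℓ = (MeasurableEquiv.toLp 2 (Fin d → ℝ)).symm ⁻¹'
      univ.pi fun i ↦ Icc (c i - ℓ / 2) (c i + ℓ / 2) := by
  ext x
  simp only [cube, mem_ofPred_eq, mem_preimage, MeasurableEquiv.toLp_symm_apply, mem_univ_pi,
    mem_Icc, abs_le]
  exact forall_congr' fun i ↦ by constructor <;> rintro ⟨h₁, h₂⟩ <;> constructor <;> linarith

lemma measurableSet_cube (c : EuclideanSpace ℝ (Fin d)) (ℓ : ℝ) :
    MeasurableSet (cube d c ℓ) := by
  rw [cube_eq_preimage_pi]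
  exact MeasurableEquiv.measurable _ (.univ_pi fun _ ↦ measurableSet_Icc)

lemma volume_cube (c : EuclideanSpace ℝ (Fin d)) (ℓ : ℝ) :
    volume (cube d c ℓ) = ENNReal.ofReal ℓ ^ d := by
  rw [cube_eq_preimage_pi, (EuclideanSpace.volume_preserving_symm_measurableEquiv_toLp
    (Fin d)).measure_preimage (MeasurableSet.univ_pi fun _ ↦ measurableSet_Icc).nullMeasurableSet,
    volume_pi_pi]
  simp [Real.volume_Icc]

lemma volume_cube_ne_top (c : EuclideanSpace ℝ (Fin d)) (ℓ : ℝ) : volume (cube d c ℓ) ≠ ⊤ := by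
  simp [volume_cube]

lemma volume_real_cube (c : EuclideanSpace ℝ (Fin d)) {ℓ : ℝ} (hℓ : 0 ≤ ℓ) :
    volume.real (cube d c ℓ) = ℓ ^ d := by
  simp [measureReal_def, volume_cube, hℓ]

lemma norm_sub_le_of_mem_cube {c x : EuclideanSpace ℝ (Fin d)} {ℓ : ℝ} (hℓ : 0 ≤ ℓ)
    (hx : x ∈ cube d c ℓ) : ‖x - c‖ ≤ √d * (ℓ / 2) := by
  rw [EuclideanSpace.norm_eq, ← Real.sqrt_sq (by positivity : 0 ≤ ℓ / 2), ← Real.sqrt_mul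
    d.cast_nonneg]
  refine Real.sqrt_le_sqrt ?_
  calc ∑ i, ‖(x - c) i‖ ^ 2 ≤ ∑ _i : Fin d, (ℓ / 2) ^ 2 :=
        Finset.sum_le_sum fun i _ ↦ pow_le_pow_left₀ (norm_nonneg _) (hx i) 2
    _ = d * (ℓ / 2) ^ 2 := by simp

lemma cube_subset_closedBall (c : EuclideanSpace ℝ (Fin d)) {ℓ : ℝ} (hℓ : 0 ≤ ℓ) :
    cube d c ℓ ⊆ closedBall c (√d * (ℓ / 2)) :=
  fun _ hx ↦ mem_closedBall_iff_norm.2 (norm_sub_le_of_mem_cube hℓ hx)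

lemma smul_cube (c : EuclideanSpace ℝ (Fin d)) {ℓ : ℝ} (hℓ : 0 < ℓ) :
    ℓ • cube d c 1 = cube d (ℓ • c) ℓ := by
  ext x
  simp only [mem_smul_set_iff_inv_smul_mem₀ hℓ.ne', cube, mem_ofPred_eq, PiLp.smul_apply,
    smul_eq_mul]
  refine forall_congr' fun i ↦ ?_
  rw [show ℓ⁻¹ * x i - c i = ℓ⁻¹ * (x i - ℓ * c i) by field_simp, abs_mul,
    abs_of_pos (inv_pos.2 hℓ), inv_mul_le_iff₀ hℓ]
  ring_nf

end Cube

lemma rpow_bounds_of_mul_le_of_le_mul {a b t u : ℝ} (β : ℝ) (ha : 0 < a) (hu : 0 < u)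
    (h₁ : a * u ≤ t) (h₂ : t ≤ b * u) :
    min (a ^ β) (b ^ β) * u ^ β ≤ t ^ β ∧ t ^ β ≤ max (a ^ β) (b ^ β) * u ^ β := by
  have hb : 0 < b := pos_of_mul_pos_left ((mul_pos ha hu).trans_le (h₁.trans h₂)) hu.le
  rw [min_mul_of_nonneg _ _ (by positivity), max_mul_of_nonneg _ _ (by positivity),
    ← Real.mul_rpow ha.le hu.le, ← Real.mul_rpow hb.le hu.le]
  have hau : 0 < a * u := mul_pos ha hu
  rcases le_or_gt 0 β with hβ | hβ
  · exact ⟨(min_le_left _ _).trans (Real.rpow_le_rpow hau.le h₁ hβ),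
      (Real.rpow_le_rpow (hau.le.trans h₁) h₂ hβ).trans (le_max_right _ _)⟩
  · exact ⟨(min_le_right _ _).trans (Real.rpow_le_rpow_of_nonpos (hau.trans_le h₁) h₂ hβ.le),
      (Real.rpow_le_rpow_of_nonpos hau h₁ hβ.le).trans (le_max_left _ _)⟩

lemma locallyIntegrable_norm_rpow {E : Type*} [NormedAddCommGroup E] [NormedSpace ℝ E]
    [FiniteDimensional ℝ E] [MeasurableSpace E] [BorelSpace E] (μ : Measure E)
    [μ.IsAddHaarMeasure] {β : ℝ} (hE : 0 < Module.finrank ℝ E)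
    (hβ : -(Module.finrank ℝ E : ℝ) < β) :
    LocallyIntegrable (fun x : E ↦ ‖x‖ ^ β) μ := by
  refine locallyIntegrable_of_norm_le_rpow (C := 1) (α := -β) hE (by linarith)
    (ae_of_all _ fun x ↦ ?_) (measurable_norm.pow_const β).aestronglyMeasurable
  rw [one_mul, neg_neg, Real.norm_of_nonneg (by positivity)]

section Theta

variable {α : Type*} {s : Set α} {f g : α → ℝ}

lemma isTheta_principal_of_bounds {a b : ℝ} (ha : 0 < a) (hg : ∀ x ∈ s, 0 ≤ g x)
    (h : ∀ x ∈ s, a * g x ≤ f x ∧ f x ≤ b * g x) : f =Θ[𝓟 s] g := by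
  have hf : ∀ x ∈ s, 0 ≤ f x := fun x hx ↦ (mul_nonneg ha.le (hg x hx)).trans (h x hx).1
  refine ⟨.of_bound b (eventually_principal.2 fun x hx ↦ ?_),
    .of_bound a⁻¹ (eventually_principal.2 fun x hx ↦ ?_)⟩
  · rw [Real.norm_of_nonneg (hf x hx), Real.norm_of_nonneg (hg x hx)]
    exact (h x hx).2
  · rw [Real.norm_of_nonneg (hf x hx), Real.norm_of_nonneg (hg x hx), le_inv_mul_iff₀ ha]
    exact (h x hx).1

lemma exists_bounds_of_isTheta_top (h : f =Θ[⊤] g) (hf : ∀ x, 0 ≤ f x) (hg : ∀ x, 0 ≤ g x) :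
    ∃ a b : ℝ, 0 < a ∧ 0 < b ∧ ∀ x, a * g x ≤ f x ∧ f x ≤ b * g x := by
  obtain ⟨b, hb, hfg⟩ := isBigO_iff'.1 h.1
  obtain ⟨a, ha, hgf⟩ := isBigO_iff''.1 h.2
  simp only [eventually_top, Real.norm_of_nonneg (hf _), Real.norm_of_nonneg (hg _)] at hfg hgf
  exact ⟨a, b, ha, hb, fun x ↦ ⟨hgf x, hfg x⟩⟩

end Theta

section CubeIntegral

variable {d : ℕ} {β : ℝ}

lemma integrableOn_norm_rpow (hd : 0 < d) (hβ : -(d : ℝ) < β)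
    {s : Set (EuclideanSpace ℝ (Fin d))} (hs : Bornology.IsBounded s) :
    IntegrableOn (fun x ↦ ‖x‖ ^ β) s :=
  ((locallyIntegrable_norm_rpow volume (by simpa) (by simpa)).integrableOn_isCompact
    hs.isCompact_closure).mono_set subset_closure

lemma isBounded_cube (c : EuclideanSpace ℝ (Fin d)) {ℓ : ℝ} (hℓ : 0 ≤ ℓ) :
    Bornology.IsBounded (cube d c ℓ) :=
  isBounded_closedBall.subset (cube_subset_closedBall c hℓ)

lemma integral_cube_norm_rpow (c : EuclideanSpace ℝ (Fin d)) {ℓ : ℝ} (hℓ : 0 < ℓ) :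
    ∫ x in cube d c ℓ, ‖x‖ ^ β = ℓ ^ β * ℓ ^ d * ∫ x in cube d (ℓ⁻¹ • c) 1, ‖x‖ ^ β := by
  have h := Measure.setIntegral_comp_smul_of_pos volume (fun x ↦ ‖x‖ ^ β) (cube d (ℓ⁻¹ • c) 1) hℓ
  simp only [norm_smul, Real.norm_of_nonneg hℓ.le, Real.mul_rpow hℓ.le (norm_nonneg _),
    integral_const_mul, smul_cube _ hℓ, smul_inv_smul₀ hℓ.ne', finrank_euclideanSpace_fin,
    smul_eq_mul] at h
  rw [mul_right_comm, h]
  field_simp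

lemma integral_cube_norm_rpow_bounds (hd : 0 < d) (hβ : -(d : ℝ) < β)
    (c : EuclideanSpace ℝ (Fin d)) {ℓ a b : ℝ} (hℓ : 0 ≤ ℓ)
    (h : ∀ x ∈ cube d c ℓ, a ≤ ‖x‖ ^ β ∧ ‖x‖ ^ β ≤ b) :
    a * ℓ ^ d ≤ ∫ x in cube d c ℓ, ‖x‖ ^ β ∧ ∫ x in cube d c ℓ, ‖x‖ ^ β ≤ b * ℓ ^ d := by
  rw [← volume_real_cube c hℓ]
  refine ⟨setIntegral_ge_of_const_le_real (measurableSet_cube c ℓ) (volume_cube_ne_top c ℓ)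
    (fun x hx ↦ (h x hx).1) (integrableOn_norm_rpow hd hβ (isBounded_cube c hℓ)),
    (Real.le_norm_self _).trans (norm_setIntegral_le_of_norm_le_const
      (volume_cube_ne_top c ℓ).lt_top fun x hx ↦ ?_)⟩
  rw [Real.norm_of_nonneg (by positivity)]
  exact (h x hx).2

end CubeIntegral

section UnitCube

variable {d : ℕ} {β : ℝ}

lemma exists_cube_subset_cube_le_norm (hd : 0 < d) (c : EuclideanSpace ℝ (Fin d)) {ℓ : ℝ}
    (hℓ : 0 ≤ ℓ) :
    ∃ c', cube d c' (ℓ / 4) ⊆ cube d c ℓ ∧ ∀ x ∈ cube d c' (ℓ / 4), ℓ / 4 ≤ ‖x‖ := by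
  let i₀ : Fin d := ⟨0, hd⟩
  -- push the small cube along the `i₀`-axis, away from the origin
  obtain ⟨σ, hσ, hσc⟩ : ∃ σ : ℝ, |σ| = 1 ∧ 0 ≤ σ * c i₀ := by
    rcases le_total 0 (c i₀) with h | h
    exacts [⟨1, by simp, by linarith⟩, ⟨-1, by simp, by linarith⟩]
  refine ⟨c + EuclideanSpace.single i₀ (σ * (3 * ℓ / 8)), fun x hx i ↦ ?_, fun x hx ↦ ?_⟩
  · have hxi := hx i
    simp only [PiLp.add_apply, PiLp.single_apply] at hxi
    set δ := if i = i₀ then σ * (3 * ℓ / 8) else 0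
    have hδ : |δ| ≤ 3 * ℓ / 8 := by
      unfold δ
      split_ifs
      · rw [abs_mul, hσ, one_mul, abs_of_nonneg (by positivity)]
      · simp; positivity
    calc |x i - c i| ≤ |x i - (c i + δ)| + |δ| := by simpa using abs_sub_le (x i) (c i + δ) (c i)
      _ ≤ ℓ / 2 := by linarith
  · have hx₀ := abs_le.1 (hx i₀)
    simp only [PiLp.add_apply, PiLp.single_apply, if_pos] at hx₀
    calc ℓ / 4 ≤ σ * x i₀ := by
          rcases abs_eq (zero_le_one) |>.1 hσ with rfl | rfl <;> nlinarith
      _ ≤ |x i₀| := by simpa [abs_mul, hσ] using le_abs_self (σ * x i₀)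
      _ ≤ ‖x‖ := PiLp.norm_apply_le x i₀

lemma isTheta_integral_unitCube_one_near (hd : 0 < d) (hβ : -(d : ℝ) < β) :
    (fun z ↦ ∫ x in cube d z 1, ‖x‖ ^ β) =Θ[𝓟 {z | ‖z‖ ≤ √d}] fun _ ↦ (1 : ℝ) := by
  have hball : Bornology.IsBounded (closedBall (0 : EuclideanSpace ℝ (Fin d)) (2 * √d)) :=
    isBounded_closedBall
  refine isTheta_principal_of_bounds (a := min ((1 / 4) ^ β) ((2 * √d) ^ β) * (1 / 4) ^ d)
    (b := ∫ x in closedBall (0 : EuclideanSpace ℝ (Fin d)) (2 * √d), ‖x‖ ^ β) (by positivity)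
    (fun _ _ ↦ zero_le_one) fun z (hz : ‖z‖ ≤ √d) ↦ ?_
  have hnorm : ∀ x ∈ cube d z 1, ‖x‖ ≤ 2 * √d := fun x hx ↦ by
    have := norm_sub_le_of_mem_cube zero_le_one hx
    linarith [norm_le_norm_add_norm_sub' x z, Real.sqrt_nonneg d]
  have hcube : cube d z 1 ⊆ closedBall 0 (2 * √d) := fun x hx ↦
    mem_closedBall_zero_iff.2 (hnorm x hx)
  obtain ⟨z', hsub, hfar⟩ := exists_cube_subset_cube_le_norm hd z zero_le_one
  rw [mul_one, mul_one]
  constructor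
  · calc _ ≤ ∫ x in cube d z' (1 / 4), ‖x‖ ^ β := by
          simpa using (integral_cube_norm_rpow_bounds hd hβ z' (ℓ := 1 / 4) (by norm_num)
            fun x hx ↦ rpow_bounds_of_mul_le_of_le_mul (a := 1 / 4) (b := 2 * √d) β (by norm_num)
              zero_lt_one (by simpa using hfar x hx) (by simpa using hnorm x (hsub hx))).1
      _ ≤ ∫ x in cube d z 1, ‖x‖ ^ β :=
          setIntegral_mono_set (integrableOn_norm_rpow hd hβ (isBounded_cube z zero_le_one))
            (ae_of_all _ fun x ↦ by positivity) hsub.eventuallyLE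
  · exact setIntegral_mono_set (integrableOn_norm_rpow hd hβ hball)
      (ae_of_all _ fun x ↦ by positivity) hcube.eventuallyLE

lemma isTheta_max_one_norm_rpow_one {E : Type*} [SeminormedAddCommGroup E] (β r : ℝ) :
    (fun z : E ↦ max 1 ‖z‖ ^ β) =Θ[𝓟 {z | ‖z‖ ≤ r}] fun _ ↦ (1 : ℝ) :=
  isTheta_principal_of_bounds (a := min (1 ^ β) (max 1 r ^ β)) (b := max (1 ^ β) (max 1 r ^ β))
    (by positivity) (fun _ _ ↦ zero_le_one) fun z (hz : ‖z‖ ≤ r) ↦ by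
      simpa using rpow_bounds_of_mul_le_of_le_mul β zero_lt_one zero_lt_one
        (by simp) (by simpa using max_le_max_left 1 hz)

lemma isTheta_integral_unitCube_far (hd : 0 < d) (hβ : -(d : ℝ) < β) :
    (fun z ↦ ∫ x in cube d z 1, ‖x‖ ^ β) =Θ[𝓟 {z | ‖z‖ ≤ √d}ᶜ] fun z ↦ max 1 ‖z‖ ^ β := by
  refine isTheta_principal_of_bounds (a := min ((1 / 2) ^ β) (2 ^ β))
    (b := max ((1 / 2) ^ β) (2 ^ β)) (by positivity) (fun _ _ ↦ by positivity)
    fun z (hz : ¬ ‖z‖ ≤ √d) ↦ ?_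
  have hz1 : 1 ≤ ‖z‖ := (Real.one_le_sqrt.2 (by exact_mod_cast hd)).trans (not_le.1 hz).le
  rw [max_eq_right hz1]
  simpa using integral_cube_norm_rpow_bounds hd hβ z zero_le_one fun x hx ↦
    have := norm_sub_le_of_mem_cube zero_le_one hx
    rpow_bounds_of_mul_le_of_le_mul β (by norm_num) (by linarith)
      (by linarith [norm_le_norm_add_norm_sub x z]) (by linarith [norm_le_norm_add_norm_sub' x z])

end UnitCube

theorem isTheta_integral_unitCube {d : ℕ} {β : ℝ} (hd : 0 < d) (hβ : -(d : ℝ) < β) :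
    (fun z ↦ ∫ x in cube d z 1, ‖x‖ ^ β) =Θ[⊤] fun z ↦ max 1 ‖z‖ ^ β := by
  rw [← principal_univ, ← union_compl_self {z | ‖z‖ ≤ √d}, ← sup_principal]
  exact .sup
    ((isTheta_integral_unitCube_one_near hd hβ).trans (isTheta_max_one_norm_rpow_one β _).symm)
    (isTheta_integral_unitCube_far hd hβ)

/-- For `β > -d`, `∫_Q |x|^β dx ≈ max(ℓ_Q, |c_Q|)^β |Q|` with constants depending
only on `d` and `β`. -/
theorem stmt0 (d : ℕ) (hd : 0 < d) (β : ℝ) (hβ : -(d : ℝ) < β) :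
    ∃ c C : ℝ, 0 < c ∧ 0 < C ∧
      ∀ (cQ : EuclideanSpace ℝ (Fin d)) (ℓ : ℝ), 0 < ℓ →
        c * max ℓ ‖cQ‖ ^ β * ℓ ^ (d : ℕ) ≤ (∫ x in cube d cQ ℓ, ‖x‖ ^ β) ∧
        (∫ x in cube d cQ ℓ, ‖x‖ ^ β) ≤ C * max ℓ ‖cQ‖ ^ β * ℓ ^ (d : ℕ) := by
  obtain ⟨c, C, hc, hC, hunit⟩ := exists_bounds_of_isTheta_top (isTheta_integral_unitCube hd hβ)
    (fun _ ↦ setIntegral_nonneg (measurableSet_cube _ _) fun _ _ ↦ by positivity)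
    (fun _ ↦ by positivity)
  refine ⟨c, C, hc, hC, fun cQ ℓ hℓ ↦ ?_⟩
  have hmax : max ℓ ‖cQ‖ = ℓ * max 1 ‖ℓ⁻¹ • cQ‖ := by
    rw [mul_max_of_nonneg _ _ hℓ.le, norm_smul, Real.norm_of_nonneg (inv_nonneg.2 hℓ.le),
      mul_inv_cancel_left₀ hℓ.ne', mul_one]
  obtain ⟨hlow, hupp⟩ := hunit (ℓ⁻¹ • cQ)
  rw [integral_cube_norm_rpow cQ hℓ, hmax, Real.mul_rpow hℓ.le (by positivity)]
  constructor
  · calc _ = ℓ ^ β * ℓ ^ d * (c * max 1 ‖ℓ⁻¹ • cQ‖ ^ β) := by ring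
      _ ≤ _ := by gcongr
  · calc _ ≤ ℓ ^ β * ℓ ^ d * (C * max 1 ‖ℓ⁻¹ • cQ‖ ^ β) := by gcongr
      _ = _ := by ring
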